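/- arXiv:2007.09821 — 4 statements merged into one kernel-verified Lean document; each statement's English description precedes it below -/
import Mathlib

section
/- For all n ≥ 0, the Hankel determinant of the Bernoulli polynomials equals the Hankel determinant of the Bernoulli numbers: det_{0≤i,j≤n}(B_{i+j}(x)) = det_{0≤i,j≤n}(B_{i+j}), as polynomials in x (equivalently, for every value of x). -/
open Finset Matrix

/-- The `n`-th Hankel determinant of a sequence `c`. -/
noncomputable def hankel {R : Type*} [CommRing R] (c : ℕ → R) (n : ℕ) : R :=
  (Matrix.of fun i j : Fin (n + 1) => c (i.1 + j.1)).det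

lemma bern_key (x : ℚ) (i j : ℕ) :
    (Polynomial.bernoulli (i+j)).eval x
      = ∑ k ∈ range (i+1), ∑ l ∈ range (j+1),
          ((i.choose k : ℚ) * x ^ (i-k)) * bernoulli (k+l) * ((j.choose l : ℚ) * x ^ (j-l)) := by
  classical
  have h1 : (Polynomial.bernoulli (i+j)).eval x
      = ∑ m ∈ range (i+j+1), bernoulli m * ((i+j).choose m : ℚ) * x ^ (i+j-m) := by
    simp [Polynomial.bernoulli, Polynomial.eval_finset_sum]
  have h2 : ∀ m, ((i+j).choose m : ℚ) = ∑ k ∈ range (m+1), (i.choose k : ℚ) * (j.choose (m-k)) := by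
    intro m
    rw [Nat.add_choose_eq, Finset.Nat.sum_antidiagonal_eq_sum_range_succ_mk]
    push_cast; ring
  rw [h1]
  simp_rw [h2, Finset.mul_sum, Finset.sum_mul]
  rw [Finset.sum_sigma', Finset.sum_sigma']
  have hsub : ((range (i+j+1)).sigma (fun m => range (m+1))).filter
        (fun p : Σ _ : ℕ, ℕ => p.2 ≤ i ∧ p.1 - p.2 ≤ j)
      ⊆ (range (i+j+1)).sigma (fun m => range (m+1)) := Finset.filter_subset _ _
  have hzero : ∀ p ∈ (range (i+j+1)).sigma (fun m => range (m+1)),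
      p ∉ ((range (i+j+1)).sigma (fun m => range (m+1))).filter
        (fun p : Σ _ : ℕ, ℕ => p.2 ≤ i ∧ p.1 - p.2 ≤ j) →
      bernoulli p.1 * ((i.choose p.2 : ℚ) * (j.choose (p.1 - p.2) : ℚ)) * x ^ (i + j - p.1) = 0 := by
    rintro ⟨m, k⟩ hm hm'
    simp only [Finset.mem_filter, hm, true_and, not_and_or, not_le] at hm'
    rcases hm' with h | h
    · rw [Nat.choose_eq_zero_of_lt h]; push_cast; ring
    · rw [Nat.choose_eq_zero_of_lt h]; push_cast; ring
  rw [← Finset.sum_subset hsub hzero]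
  refine Finset.sum_nbij' (fun p : Σ _ : ℕ, ℕ => (⟨p.2, p.1 - p.2⟩ : Σ _ : ℕ, ℕ))
    (fun q : Σ _ : ℕ, ℕ => (⟨q.1 + q.2, q.1⟩ : Σ _ : ℕ, ℕ)) ?_ ?_ ?_ ?_ ?_
  · rintro ⟨m, k⟩ h
    simp only [Finset.mem_filter, Finset.mem_sigma, Finset.mem_range] at h ⊢
    omega
  · rintro ⟨k, l⟩ h
    simp only [Finset.mem_filter, Finset.mem_sigma, Finset.mem_range] at h ⊢
    omega
  · rintro ⟨m, k⟩ h
    simp only [Finset.mem_filter, Finset.mem_sigma, Finset.mem_range] at h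
    have e : k + (m - k) = m := by omega
    simp [e]
  · rintro ⟨k, l⟩ h
    simp
  · rintro ⟨m, k⟩ h
    simp only [Finset.mem_filter, Finset.mem_sigma, Finset.mem_range] at h
    obtain ⟨⟨hm, hk⟩, hki, hmj⟩ := h
    simp only []
    have e1 : k + (m - k) = m := by omega
    have e2 : i + j - m = (i - k) + (j - (m - k)) := by omega
    rw [e1, e2, pow_add]
    ring

lemma bern_key' (x : ℚ) (n i j : ℕ) (hi : i ≤ n) (hj : j ≤ n) :
    (Polynomial.bernoulli (i+j)).eval x
      = ∑ k ∈ range (n+1), ∑ l ∈ range (n+1),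
          ((i.choose k : ℚ) * x ^ (i-k)) * bernoulli (k+l) * ((j.choose l : ℚ) * x ^ (j-l)) := by
  rw [bern_key]
  have inner : ∀ k, ∑ l ∈ range (j+1),
        ((i.choose k : ℚ) * x ^ (i-k)) * bernoulli (k+l) * ((j.choose l : ℚ) * x ^ (j-l))
      = ∑ l ∈ range (n+1),
        ((i.choose k : ℚ) * x ^ (i-k)) * bernoulli (k+l) * ((j.choose l : ℚ) * x ^ (j-l)) := by
    intro k
    apply Finset.sum_subset (Finset.range_subset_range.2 (by omega : j+1 ≤ n+1))
    intro l _ hl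
    rw [Nat.choose_eq_zero_of_lt (show j < l by simpa using hl)]
    push_cast; ring
  simp_rw [inner]
  apply Finset.sum_subset (Finset.range_subset_range.2 (by omega : i+1 ≤ n+1))
  intro k _ hk
  apply Finset.sum_eq_zero
  intro l _
  rw [Nat.choose_eq_zero_of_lt (show i < k by simpa using hk)]
  push_cast; ring

theorem hankel_bernoulli_poly (n : ℕ) (x : ℚ) :
    hankel (fun k => (Polynomial.bernoulli k).eval x) n = hankel (fun k => bernoulli k) n := by
  classical
  set L : Matrix (Fin (n+1)) (Fin (n+1)) ℚ :=
    Matrix.of (fun i j : Fin (n+1) => (i.1.choose j.1 : ℚ) * x ^ (i.1 - j.1)) with hL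
  set H : Matrix (Fin (n+1)) (Fin (n+1)) ℚ :=
    Matrix.of (fun i j : Fin (n+1) => (bernoulli (i.1 + j.1) : ℚ)) with hH
  have hfact : (Matrix.of fun i j : Fin (n+1) => (Polynomial.bernoulli (i.1 + j.1)).eval x)
      = L * H * Lᵀ := by
    ext i j
    rw [Matrix.mul_apply]
    simp only [Matrix.mul_apply, Matrix.transpose_apply, Finset.sum_mul, hL, hH, Matrix.of_apply]
    rw [Finset.sum_comm]
    rw [bern_key' x n i.1 j.1 (by omega) (by omega)]
    rw [← Fin.sum_univ_eq_sum_range (fun k => ∑ l ∈ range (n+1),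
      ((i.1.choose k : ℚ) * x ^ (i.1-k)) * bernoulli (k+l) * ((j.1.choose l : ℚ) * x ^ (j.1-l)))]
    refine Finset.sum_congr rfl fun k _ => ?_
    rw [← Fin.sum_univ_eq_sum_range]
  have htri : L.BlockTriangular OrderDual.toDual := by
    intro i j hij
    have hij' : (i : ℕ) < (j : ℕ) := hij
    simp only [hL, Matrix.of_apply]
    rw [Nat.choose_eq_zero_of_lt hij']
    ring
  have hdetL : L.det = 1 := by
    rw [Matrix.det_of_lowerTriangular L htri]
    simp [hL]
  have : hankel (fun k => (Polynomial.bernoulli k).eval x) n = (L * H * Lᵀ).det := by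
    rw [hankel, hfact]
  rw [this, Matrix.det_mul, Matrix.det_mul, Matrix.det_transpose, hdetL]
  simp [hankel, hH]
end

section
/- For all n ≥ 0, the Hankel determinant of the Euler polynomials satisfies det_{0≤i,j≤n}(E_{i+j}(x)) = 2^{−n(n+1)} · det_{0≤i,j≤n}(E_{i+j}), where E_k are the Euler numbers, as an identity of polynomials in x. -/
/-- The `n`-th Euler polynomial, evaluated at `x`, via
`E_n(x) = (2/(n+1)) (B_{n+1}(x) - 2^{n+1} B_{n+1}(x/2))`. -/
noncomputable def eulerPoly (n : ℕ) (x : ℚ) : ℚ :=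
  (2 / (n + 1)) *
    ((Polynomial.bernoulli (n + 1)).eval x - 2 ^ (n + 1) * (Polynomial.bernoulli (n + 1)).eval (x / 2))

/-- The `n`-th Euler number `E_n = 2^n E_n(1/2)`. -/
noncomputable def eulerNum (n : ℕ) : ℚ := 2 ^ n * eulerPoly n (1 / 2)

open Finset Polynomial Matrix

lemma bernoulli_natDegree_le (n : ℕ) : (Polynomial.bernoulli n).natDegree ≤ n := by
  unfold Polynomial.bernoulli
  apply Polynomial.natDegree_sum_le_of_forall_le
  intro i hi
  exact (Polynomial.natDegree_monomial_le _).trans (Nat.sub_le _ _)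

lemma iterate_derivative_bernoulli (n k : ℕ) :
    (Polynomial.derivative)^[k] (Polynomial.bernoulli n)
      = Polynomial.C (n.descFactorial k : ℚ) * Polynomial.bernoulli (n - k) := by
  induction k with
  | zero => simp
  | succ k ih =>
    rw [Function.iterate_succ_apply', ih, derivative_mul, Polynomial.derivative_C, zero_mul,
      zero_add, Polynomial.derivative_bernoulli, Nat.descFactorial_succ, Nat.sub_sub,
      ← Polynomial.C_eq_natCast, ← mul_assoc, ← Polynomial.C_mul]
    push_cast
    ring_nf

lemma hasseDeriv_bernoulli (n k : ℕ) :
    Polynomial.hasseDeriv k (Polynomial.bernoulli n)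
      = Polynomial.C (n.choose k : ℚ) * Polynomial.bernoulli (n - k) := by
  have h : (Nat.factorial k) • Polynomial.hasseDeriv k (Polynomial.bernoulli n)
      = Polynomial.C (n.descFactorial k : ℚ) * Polynomial.bernoulli (n - k) := by
    have h0 := congrFun (Polynomial.factorial_smul_hasseDeriv (R := ℚ) k) (Polynomial.bernoulli n)
    simp only [Pi.smul_apply, LinearMap.smul_apply] at h0
    rw [h0, iterate_derivative_bernoulli]
  rw [nsmul_eq_mul, ← Polynomial.C_eq_natCast, Nat.descFactorial_eq_factorial_mul_choose] at h
  have hk : (Polynomial.C (Nat.factorial k : ℚ)) ≠ 0 := by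
    simp only [ne_eq, Polynomial.C_eq_zero]
    exact_mod_cast k.factorial_ne_zero
  apply mul_left_cancel₀ hk
  rw [h]
  push_cast
  rw [Polynomial.C_mul, mul_assoc]

lemma bernoulli_eval_add (n : ℕ) (y t : ℚ) :
    (Polynomial.bernoulli n).eval (y + t)
      = ∑ k ∈ range (n + 1), (n.choose k : ℚ) * (Polynomial.bernoulli (n - k)).eval y * t ^ k := by
  have h1 : (Polynomial.bernoulli n).eval (y + t)
      = (Polynomial.taylor y (Polynomial.bernoulli n)).eval t := by
    rw [Polynomial.taylor_eval, add_comm]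
  rw [h1, Polynomial.eval_eq_sum_range' (n := n + 1)
    (by rw [Polynomial.natDegree_taylor]; exact Nat.lt_succ_of_le (bernoulli_natDegree_le n))]
  refine sum_congr rfl fun k hk => ?_
  rw [Polynomial.taylor_coeff, hasseDeriv_bernoulli]
  simp [mul_comm]

lemma eulerPoly_add (n : ℕ) (y t : ℚ) :
    eulerPoly n (y + t) = ∑ k ∈ range (n + 1), (n.choose k : ℚ) * eulerPoly (n - k) y * t ^ k := by
  have h2 : (y + t) / 2 = y / 2 + t / 2 := by ring
  rw [eulerPoly, bernoulli_eval_add, h2, bernoulli_eval_add, Finset.mul_sum,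
    ← Finset.sum_sub_distrib, Finset.mul_sum, Finset.sum_range_succ]
  have hlast : (2 / ((n : ℚ) + 1)) *
      (((n+1).choose (n+1) : ℚ) * (Polynomial.bernoulli (n+1-(n+1))).eval y * t ^ (n+1)
        - 2 ^ (n+1) * (((n+1).choose (n+1) : ℚ) * (Polynomial.bernoulli (n+1-(n+1))).eval (y/2) * (t/2) ^ (n+1))) = 0 := by
    simp only [Nat.choose_self, Nat.sub_self, Nat.cast_one, one_mul]
    have h1 : (Polynomial.bernoulli 0).eval y = 1 := by simp
    have h2' : (Polynomial.bernoulli 0).eval (y/2) = 1 := by simp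
    have h3 : (2:ℚ) ^ (n+1) * (t/2) ^ (n+1) = t ^ (n+1) := by
      rw [div_pow]; field_simp
    rw [h1, h2', one_mul, one_mul, h3]
    ring
  rw [hlast, add_zero]
  refine sum_congr rfl fun k hk => ?_
  have hkn : k ≤ n := Nat.lt_succ_iff.mp (mem_range.mp hk)
  obtain ⟨m, rfl⟩ : ∃ m, n = m + k := ⟨n - k, by omega⟩
  have hsub : m + k + 1 - k = m + 1 := by omega
  have hsub2 : m + k - k = m := by omega
  have hpow : (2 : ℚ) ^ (m + k + 1) = 2 ^ (m + 1) * 2 ^ k := by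
    rw [← pow_add]; congr 1; omega
  rw [hsub, hsub2, hpow, eulerPoly]
  have hc : (((m+k+1).choose k : ℚ)) * ((m : ℚ) + 1) = ((m+k).choose k : ℚ) * ((m : ℚ) + (k : ℚ) + 1) := by
    have := Nat.choose_mul_succ_eq (m + k) k
    rw [show m + k + 1 - k = m + 1 by omega] at this
    exact_mod_cast this.symm
  have ht : (2:ℚ) ^ k * (t/2) ^ k = t ^ k := by rw [div_pow]; field_simp
  have hn1 : ((m : ℚ) + (k : ℚ) + 1) ≠ 0 := by positivity
  have hm1 : ((m : ℚ) + 1) ≠ 0 := by positivity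
  set A := (Polynomial.bernoulli (m+1)).eval y
  set B := (Polynomial.bernoulli (m+1)).eval (y/2)
  push_cast
  field_simp
  linear_combination (t ^ k * (A - 2 ^ (m+1) * B)) * hc - ((((m+k+1).choose k : ℕ) : ℚ) * ((m : ℚ) + 1) * 2 ^ (m+1) * B) * ht

lemma eulerPoly_add' (N : ℕ) (y t : ℚ) :
    eulerPoly N (y + t) = ∑ m ∈ range (N + 1), (N.choose m : ℚ) * eulerPoly m y * t ^ (N - m) := by
  rw [eulerPoly_add, ← Finset.sum_range_reflect]
  refine sum_congr rfl fun k hk => ?_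
  have hk' : k ≤ N := Nat.lt_succ_iff.mp (mem_range.mp hk)
  rw [show N + 1 - 1 - k = N - k from by omega, Nat.choose_symm hk', Nat.sub_sub_self hk']

lemma triangle_sum (N : ℕ) (f : ℕ → ℕ → ℚ) :
    ∑ m ∈ range (N + 1), ∑ p ∈ Finset.HasAntidiagonal.antidiagonal m, f p.1 p.2
      = ∑ k ∈ range (N + 1), ∑ l ∈ range (N + 1 - k), f k l := by
  have h1 : ∀ m, ∑ p ∈ Finset.HasAntidiagonal.antidiagonal m, f p.1 p.2
      = ∑ k ∈ range (m + 1), f k (m - k) := by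
    intro m
    rw [Finset.Nat.sum_antidiagonal_eq_sum_range_succ_mk]
  simp only [h1]
  have h2 : ∑ m ∈ range (N + 1), ∑ k ∈ range (m + 1), f k (m - k)
      = ∑ k ∈ range (N + 1), ∑ m ∈ Finset.Ico k (N + 1), f k (m - k) := by
    simp_rw [Finset.range_eq_Ico]
    exact (Finset.sum_Ico_Ico_comm 0 (N + 1) (fun i j => f i (j - i))).symm
  rw [h2]
  refine sum_congr rfl fun k hk => ?_
  rw [Finset.sum_Ico_eq_sum_range]
  refine sum_congr rfl fun l hl => ?_
  congr 1
  omega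

lemma binomial_entry (n i j : ℕ) (hi : i ≤ n) (hj : j ≤ n) (c : ℕ → ℚ) (t : ℚ) :
    ∑ m ∈ range (i + j + 1), ((i + j).choose m : ℚ) * c m * t ^ (i + j - m)
      = ∑ k ∈ range (n + 1), ∑ l ∈ range (n + 1),
          ((i.choose k : ℚ) * t ^ (i - k)) * c (k + l) * ((j.choose l : ℚ) * t ^ (j - l)) := by
  set F : ℕ → ℕ → ℚ :=
    fun k l => (i.choose k : ℚ) * (j.choose l : ℚ) * c (k + l) * t ^ (i + j - (k + l)) with hF
  have hF0 : ∀ k l, i < k ∨ j < l → F k l = 0 := by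
    intro k l h
    rcases h with h | h <;> simp [hF, Nat.choose_eq_zero_of_lt h]
  have box : ∀ (M : ℕ) (b : ℕ → ℕ), i < M → (∀ k, k ≤ i → j < b k) →
      ∑ k ∈ range M, ∑ l ∈ range (b k), F k l
        = ∑ k ∈ range (i + 1), ∑ l ∈ range (j + 1), F k l := by
    intro M b hM hb
    rw [← Finset.sum_subset (Finset.range_subset_range.mpr hM)
      (fun k _ hk => Finset.sum_eq_zero fun l _ =>
        hF0 k l (Or.inl (by simp only [mem_range, not_lt] at hk; omega)))]
    refine sum_congr rfl fun k hk => ?_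
    have hki : k ≤ i := Nat.lt_succ_iff.mp (mem_range.mp hk)
    exact (Finset.sum_subset (Finset.range_subset_range.mpr (hb k hki))
      (fun l _ hl => hF0 k l (Or.inr (by simp only [mem_range, not_lt, Nat.lt_succ] at hl; omega)))).symm
  have step1 : ∑ m ∈ range (i + j + 1), ((i + j).choose m : ℚ) * c m * t ^ (i + j - m)
      = ∑ m ∈ range (i + j + 1), ∑ p ∈ Finset.HasAntidiagonal.antidiagonal m, F p.1 p.2 := by
    refine sum_congr rfl fun m hm => ?_
    rw [Nat.add_choose_eq]
    push_cast
    rw [Finset.sum_mul, Finset.sum_mul]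
    refine sum_congr rfl fun p hp => ?_
    have hpm : p.1 + p.2 = m := Finset.HasAntidiagonal.mem_antidiagonal.mp hp
    rw [hF]
    simp only [hpm]
  rw [step1, triangle_sum]
  rw [box (i + j + 1) (fun k => i + j + 1 - k) (by omega) (fun k hk => by show j < i + j + 1 - k; omega),
    ← box (n + 1) (fun _ => n + 1) (by omega) (fun k hk => by show j < n + 1; omega)]
  refine sum_congr rfl fun k hk => sum_congr rfl fun l hl => ?_
  rcases le_or_gt k i with hki | hki
  · rcases le_or_gt l j with hlj | hlj
    · rw [hF]
      simp only
      rw [show i + j - (k + l) = (i - k) + (j - l) from by omega, pow_add]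
      ring
    · rw [hF0 k l (Or.inr hlj)]
      simp [Nat.choose_eq_zero_of_lt hlj]
  · rw [hF0 k l (Or.inl hki)]
    simp [Nat.choose_eq_zero_of_lt hki]

theorem hankel_euler_poly (n : ℕ) (x : ℚ) :
    hankel (fun k => eulerPoly k x) n = ((2 : ℚ) ^ (n * (n + 1)))⁻¹ * hankel eulerNum n := by
  set t : ℚ := x - 1 / 2 with ht
  set c : ℕ → ℚ := fun m => eulerPoly m (1 / 2) with hc
  have hx : x = 1 / 2 + t := by rw [ht]; ring
  set A : Matrix (Fin (n + 1)) (Fin (n + 1)) ℚ :=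
    Matrix.of (fun i k : Fin (n + 1) => ((i.1.choose k.1 : ℚ) * t ^ (i.1 - k.1))) with hA
  set H : Matrix (Fin (n + 1)) (Fin (n + 1)) ℚ :=
    Matrix.of (fun k l : Fin (n + 1) => c (k.1 + l.1)) with hH
  have hM : (Matrix.of fun i j : Fin (n + 1) => eulerPoly (i.1 + j.1) x) = A * H * Aᵀ := by
    ext i j
    have hi : (i : ℕ) ≤ n := Nat.lt_succ_iff.mp i.2
    have hj : (j : ℕ) ≤ n := Nat.lt_succ_iff.mp j.2
    simp only [Matrix.mul_apply, Matrix.transpose_apply, Matrix.of_apply, Finset.sum_mul, hA, hH]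
    rw [hx, eulerPoly_add', binomial_entry n i j hi hj c t, Finset.sum_comm]
    simp only [← Fin.sum_univ_eq_sum_range]
  have hdetA : A.det = 1 := by
    rw [Matrix.det_of_lowerTriangular A (by
      intro i j hij
      simp only [hA, Matrix.of_apply]
      have : (i : ℕ) < j := hij
      simp [Nat.choose_eq_zero_of_lt this])]
    simp [hA]
  set D : Matrix (Fin (n + 1)) (Fin (n + 1)) ℚ :=
    Matrix.diagonal (fun i : Fin (n + 1) => (2 : ℚ) ^ i.1) with hD
  have hE : (Matrix.of fun i j : Fin (n + 1) => eulerNum (i.1 + j.1)) = D * H * D := by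
    ext i j
    simp [hD, hH, Matrix.mul_apply, Matrix.diagonal, eulerNum, pow_add, hc]
    ring
  have hdd : D.det * D.det = (2 : ℚ) ^ (n * (n + 1)) := by
    rw [hD, Matrix.det_diagonal, Finset.prod_pow_eq_pow_sum, ← pow_add,
      Fin.sum_univ_eq_sum_range (fun i => i) (n + 1)]
    congr 1
    calc (∑ i ∈ range (n + 1), i) + (∑ i ∈ range (n + 1), i)
        = (∑ i ∈ range (n + 1), i) * 2 := by ring
      _ = (n + 1) * n := Finset.sum_range_id_mul_two (n + 1)
      _ = n * (n + 1) := Nat.mul_comm _ _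
  have h1 : hankel (fun k => eulerPoly k x) n = H.det := by
    show (Matrix.of fun i j : Fin (n + 1) => eulerPoly (i.1 + j.1) x).det = H.det
    rw [hM, Matrix.det_mul, Matrix.det_mul, Matrix.det_transpose, hdetA]
    ring
  have h2 : hankel eulerNum n = D.det * D.det * H.det := by
    show (Matrix.of fun i j : Fin (n + 1) => eulerNum (i.1 + j.1)).det = _
    rw [hE, Matrix.det_mul, Matrix.det_mul]
    ring
  rw [h1, h2, hdd, ← mul_assoc, inv_mul_cancel₀ (by positivity), one_mul]
end

section
/- Let M = (M_{i,j})_{0≤i,j≤n−1} be an n×n matrix over a commutative ring such that M_{i,j} = 0 whenever i+j is even. If n is odd then det(M) = 0. If n is even then det(M) = (−1)^{n/2} · det_{0≤i,j≤⌊(n−1)/2⌋}(M_{2i+1,2j}) · det_{0≤i,j≤⌊(n−2)/2⌋}(M_{2i,2j+1}). -/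
open Equiv Equiv.Perm Matrix

lemma sign_sumComm' (m : ℕ) :
    Perm.sign (Equiv.sumComm (Fin m) (Fin m) : Perm (Fin m ⊕ Fin m)) = (-1) ^ m := by
  have h := Perm.sign_eq_sign_of_equiv
    (Equiv.prodCongrLeft (fun _ : Fin m => Equiv.swap false true))
    (Equiv.sumComm (Fin m) (Fin m)) (Equiv.boolProdEquivSum (Fin m)) ?_
  · rw [← h, Perm.sign_prodCongrLeft]
    simp [Perm.sign_swap]
  · rintro ⟨b | b, i⟩ <;> rfl

lemma checkerboard_even {R : Type*} [CommRing R] (m : ℕ)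
    (M : Matrix (Fin (2 * m)) (Fin (2 * m)) R)
    (hM : ∀ i j : Fin (2 * m), (i.1 + j.1) % 2 = 0 → M i j = 0) :
    M.det = (-1 : R) ^ m *
      ((Matrix.of fun i j : Fin m => M ⟨2 * i.1 + 1, by omega⟩ ⟨2 * j.1, by omega⟩).det *
       (Matrix.of fun i j : Fin m => M ⟨2 * i.1, by omega⟩ ⟨2 * j.1 + 1, by omega⟩).det) := by
  set A : Matrix (Fin m) (Fin m) R :=
    Matrix.of fun i j : Fin m => M ⟨2 * i.1 + 1, by omega⟩ ⟨2 * j.1, by omega⟩ with hA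
  set B : Matrix (Fin m) (Fin m) R :=
    Matrix.of fun i j : Fin m => M ⟨2 * i.1, by omega⟩ ⟨2 * j.1 + 1, by omega⟩ with hB
  let e : Fin m ⊕ Fin m ≃ Fin (2 * m) :=
    { toFun := Sum.elim (fun i => ⟨2 * i.1, by omega⟩) (fun i => ⟨2 * i.1 + 1, by omega⟩)
      invFun := fun k => if k.1 % 2 = 0 then Sum.inl ⟨k.1 / 2, by omega⟩
        else Sum.inr ⟨k.1 / 2, by omega⟩
      left_inv := by
        rintro (i | i) <;> dsimp only [Sum.elim_inl, Sum.elim_inr]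
        · rw [if_pos (by omega)]
          refine congrArg Sum.inl (Fin.ext ?_)
          show 2 * i.1 / 2 = i.1
          omega
        · rw [if_neg (by omega)]
          refine congrArg Sum.inr (Fin.ext ?_)
          show (2 * i.1 + 1) / 2 = i.1
          omega
      right_inv := by
        intro k
        dsimp only
        by_cases h : k.1 % 2 = 0
        · rw [if_pos h]
          apply Fin.ext
          show 2 * (k.1 / 2) = k.1
          omega
        · rw [if_neg h]
          apply Fin.ext
          show 2 * (k.1 / 2) + 1 = k.1
          omega }
  have key : M.submatrix e e = Matrix.fromBlocks 0 B A 0 := by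
    ext (i | i) (j | j)
    · exact hM _ _ (by show (2 * i.1 + 2 * j.1) % 2 = 0; omega)
    · rfl
    · rfl
    · exact hM _ _ (by show (2 * i.1 + 1 + (2 * j.1 + 1)) % 2 = 0; omega)
  have h1 : M.det = (Matrix.fromBlocks 0 B A 0).det := by
    rw [← key, Matrix.det_submatrix_equiv_self]
  have h2 : (Matrix.fromBlocks 0 B A 0 : Matrix _ _ R) =
      (Matrix.fromBlocks A 0 0 B).submatrix (Equiv.sumComm (Fin m) (Fin m)) id := by
    ext (i | i) (j | j) <;> rfl
  rw [h1, h2, Matrix.det_permute, sign_sumComm', Matrix.det_fromBlocks_zero₁₂]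
  push_cast
  ring

theorem checkerboard_det_odd {R : Type*} [CommRing R] (n : ℕ) (M : Matrix (Fin n) (Fin n) R)
    (hM : ∀ i j : Fin n, (i.1 + j.1) % 2 = 0 → M i j = 0) :
    (Odd n → M.det = 0) ∧
    (Even n → M.det =
      (-1 : R) ^ (n / 2) *
        ((Matrix.of fun i j : Fin (n / 2) =>
            M ⟨2 * i.1 + 1, by omega⟩ ⟨2 * j.1, by omega⟩).det *
         (Matrix.of fun i j : Fin (n / 2) =>
            M ⟨2 * i.1, by omega⟩ ⟨2 * j.1 + 1, by omega⟩).det)) := by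
  constructor
  · intro hn
    rw [Matrix.det_apply]
    refine Finset.sum_eq_zero fun σ _ => ?_
    suffices h : ∏ i, M (σ i) i = 0 by rw [h, smul_zero]
    by_contra hne
    have hall : ∀ i : Fin n, ((σ i).1 + i.1) % 2 = 1 := by
      intro i
      rcases Nat.mod_two_eq_zero_or_one ((σ i).1 + i.1) with h | h
      · exact absurd (Finset.prod_eq_zero (f := fun j : Fin n => M (σ j) j)
          (Finset.mem_univ i) (hM _ _ h)) hne
      · exact h
    have hS1 : ∀ i : Fin n, (((σ i).1 + i.1 : ℕ) : ZMod 2) = 1 := fun i => by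
      rw [← ZMod.natCast_mod, hall i, Nat.cast_one]
    have hS : ∑ i : Fin n, ((((σ i).1 + i.1 : ℕ) : ZMod 2)) = (n : ZMod 2) := by
      rw [Finset.sum_congr rfl fun i _ => hS1 i]
      simp
    have hS0 : ∑ i : Fin n, ((((σ i).1 + i.1 : ℕ) : ZMod 2)) = 0 := by
      push_cast
      rw [Finset.sum_add_distrib, Equiv.sum_comp σ (fun i : Fin n => ((i.1 : ZMod 2)))]
      exact CharTwo.add_self_eq_zero _
    rw [hS0] at hS
    have h1 : (n : ZMod 2) = 1 := by
      rw [← ZMod.natCast_mod, Nat.odd_iff.mp hn, Nat.cast_one]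
    rw [h1] at hS
    exact one_ne_zero hS.symm
  · intro hn
    obtain ⟨m, hm⟩ := hn
    have hn2 : n = 2 * m := by omega
    subst hn2
    have hd : 2 * m / 2 = m := by omega
    have main := checkerboard_even m M hM
    rw [main]
    congr 1
    · rw [hd]
    congr 1
    · rw [← Matrix.det_submatrix_equiv_self (finCongr hd) _]
      rfl
    · rw [← Matrix.det_submatrix_equiv_self (finCongr hd) _]
      rfl
end

section
/- For an odd integer s ≥ 1 and T_k(s) = 1 − 2^k + 3^k − ... + s^k, for all m ≥ 0: H_{2m}(T_k(s)) = ((−1)^m/(m!)^2) · Π_{ℓ=1}^{m} ( (ℓ^2/4)(s^2 − (2ℓ−1)^2) )^{2(m+1−ℓ)}, and H_{2m+1}(T_k(s)) = (1/4^{m+1}) · Π_{ℓ=0}^{m} ( (ℓ!)^4/16^ℓ ) (s^2 − (2ℓ+1)^2)^{2(m−ℓ)+1}. These determinants vanish for m ≥ (s+1)/2, respectively m ≥ (s−1)/2. -/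
/-- The alternating power sum `T_k(s) = 1 - 2^k + 3^k - ⋯ + (-1)^{s-1} s^k`. -/
noncomputable def altPowerSum (s k : ℕ) : ℚ :=
  ∑ j ∈ Finset.Icc 1 s, (-1 : ℚ) ^ (j - 1) * (j : ℚ) ^ k

section HankelAuxSection
open Finset Polynomial Matrix
namespace HankelAux

lemma det_weighted_eval (S : Finset ℕ) (w x : ℕ → ℚ) (n : ℕ)
    (P Q : ℕ → Polynomial ℚ)
    (hPm : ∀ i, (P i).Monic) (hPd : ∀ i, (P i).natDegree = i)
    (hQm : ∀ i, (Q i).Monic) (hQd : ∀ i, (Q i).natDegree = i) :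
    (Matrix.of fun i j : Fin (n+1) =>
        ∑ t ∈ S, w t * ((P (i:ℕ)).eval (x t) * (Q (j:ℕ)).eval (x t))).det
      = (Matrix.of fun i j : Fin (n+1) => ∑ t ∈ S, w t * x t ^ ((i:ℕ)+(j:ℕ))).det := by
  classical
  set C : Matrix (Fin (n+1)) (Fin (n+1)) ℚ := Matrix.of fun i k => (P (i:ℕ)).coeff (k:ℕ) with hC
  set D : Matrix (Fin (n+1)) (Fin (n+1)) ℚ := Matrix.of fun j l => (Q (j:ℕ)).coeff (l:ℕ) with hD
  set M : Matrix (Fin (n+1)) (Fin (n+1)) ℚ :=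
    Matrix.of fun k l : Fin (n+1) => ∑ t ∈ S, w t * x t ^ ((k:ℕ)+(l:ℕ)) with hM
  have key : (Matrix.of fun i j : Fin (n+1) =>
      ∑ t ∈ S, w t * ((P (i:ℕ)).eval (x t) * (Q (j:ℕ)).eval (x t))) = C * M * Dᵀ := by
    ext i j
    have hev : ∀ t, (P (i:ℕ)).eval (x t) = ∑ k : Fin (n+1), (P (i:ℕ)).coeff (k:ℕ) * x t ^ (k:ℕ) := by
      intro t
      rw [Polynomial.eval_eq_sum_range' (lt_of_le_of_lt (le_of_eq (hPd i)) i.2) (x t)]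
      rw [Fin.sum_univ_eq_sum_range (fun k => (P (i:ℕ)).coeff k * x t ^ k) (n+1)]
    have hev' : ∀ t, (Q (j:ℕ)).eval (x t) = ∑ l : Fin (n+1), (Q (j:ℕ)).coeff (l:ℕ) * x t ^ (l:ℕ) := by
      intro t
      rw [Polynomial.eval_eq_sum_range' (lt_of_le_of_lt (le_of_eq (hQd j)) j.2) (x t)]
      rw [Fin.sum_univ_eq_sum_range (fun l => (Q (j:ℕ)).coeff l * x t ^ l) (n+1)]
    show ∑ t ∈ S, w t * ((P (i:ℕ)).eval (x t) * (Q (j:ℕ)).eval (x t)) = (C * M * Dᵀ) i j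
    rw [Matrix.mul_apply]
    simp only [Matrix.mul_apply, Matrix.transpose_apply, hC, hD, hM, Matrix.of_apply]
    simp only [hev, hev', Finset.sum_mul_sum, Finset.mul_sum, Finset.sum_mul, pow_add]
    rw [Finset.sum_comm]
    refine Finset.sum_congr rfl fun l _ => ?_
    rw [Finset.sum_comm]
    refine Finset.sum_congr rfl fun k _ => Finset.sum_congr rfl fun t _ => by ring
  have hCdet : C.det = 1 := by
    have htri : C.BlockTriangular OrderDual.toDual := by
      intro k i hki
      simp only [hC, Matrix.of_apply]
      exact Polynomial.coeff_eq_zero_of_natDegree_lt (by rw [hPd]; exact hki)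
    rw [Matrix.det_of_lowerTriangular _ htri]
    apply Finset.prod_eq_one
    intro i _
    simp only [hC, Matrix.of_apply]
    have := (hPm (i:ℕ)).coeff_natDegree
    rwa [hPd] at this
  have hDdet : D.det = 1 := by
    have htri : D.BlockTriangular OrderDual.toDual := by
      intro k i hki
      simp only [hD, Matrix.of_apply]
      exact Polynomial.coeff_eq_zero_of_natDegree_lt (by rw [hQd]; exact hki)
    rw [Matrix.det_of_lowerTriangular _ htri]
    apply Finset.prod_eq_one
    intro i _
    simp only [hD, Matrix.of_apply]
    have := (hQm (i:ℕ)).coeff_natDegree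
    rwa [hQd] at this
  rw [key, Matrix.det_mul, Matrix.det_mul, hCdet, Matrix.det_transpose, hDdet]
  ring

def interleave (p q : ℕ) (h : q = p ∨ q + 1 = p) : (Fin p ⊕ Fin q) ≃ Fin (p + q) where
  toFun := Sum.elim (fun a => ⟨2*a.1, by omega⟩) (fun b => ⟨2*b.1+1, by omega⟩)
  invFun t := if hpar : (t:ℕ) % 2 = 0 then Sum.inl ⟨(t:ℕ)/2, by have := t.2; omega⟩
    else Sum.inr ⟨(t:ℕ)/2, by have := t.2; omega⟩
  left_inv := by
    rintro (a|b) <;> simp only [Sum.elim_inl, Sum.elim_inr, Fin.val_mk] <;> split_ifs with hh <;>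
      first
        | (exfalso; omega)
        | (simp only [hh, ↓reduceDIte, Sum.inl.injEq, Sum.inr.injEq, Fin.ext_iff, Fin.val_mk]; omega)
  right_inv := by
    rintro ⟨t,ht⟩
    simp only []
    split_ifs with hh <;> simp only [Sum.elim_inl, Sum.elim_inr, Fin.ext_iff, Fin.val_mk] <;> omega

lemma det_checker (c : ℕ → ℚ) (hc : ∀ k, Odd k → c k = 0) (p q : ℕ) (h : q = p ∨ q + 1 = p) :
    (Matrix.of fun i j : Fin (p + q) => c ((i:ℕ)+(j:ℕ))).det
      = (Matrix.of fun a b : Fin p => c (2*(a:ℕ)+2*(b:ℕ))).det *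
        (Matrix.of fun a b : Fin q => c (2*(a:ℕ)+2*(b:ℕ)+2)).det := by
  classical
  set M : Matrix (Fin (p+q)) (Fin (p+q)) ℚ := Matrix.of fun i j => c ((i:ℕ)+(j:ℕ)) with hM
  set e := interleave p q h with he
  rw [← Matrix.det_submatrix_equiv_self e M]
  set Ms := M.submatrix e e with hMs
  have h21 : Ms.toBlocks₂₁ = 0 := by
    ext a b
    show M (e (Sum.inr a)) (e (Sum.inl b)) = 0
    show c (((2*(a:ℕ)+1) : ℕ) + (2*(b:ℕ) : ℕ)) = 0
    exact hc _ ⟨(a:ℕ)+(b:ℕ), by omega⟩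
  have h11 : Ms.toBlocks₁₁ = Matrix.of fun a b : Fin p => c (2*(a:ℕ)+2*(b:ℕ)) := by
    ext a b
    show c ((2*(a:ℕ) : ℕ) + (2*(b:ℕ) : ℕ)) = c (2*(a:ℕ)+2*(b:ℕ))
    rfl
  have h22 : Ms.toBlocks₂₂ = Matrix.of fun a b : Fin q => c (2*(a:ℕ)+2*(b:ℕ)+2) := by
    ext a b
    show c ((2*(a:ℕ)+1 : ℕ) + (2*(b:ℕ)+1 : ℕ)) = c (2*(a:ℕ)+2*(b:ℕ)+2)
    congr 1; omega
  calc Ms.det = (Matrix.fromBlocks Ms.toBlocks₁₁ Ms.toBlocks₁₂ Ms.toBlocks₂₁ Ms.toBlocks₂₂).det := by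
        rw [Matrix.fromBlocks_toBlocks]
    _ = _ := by rw [h21, h11, h22, Matrix.det_fromBlocks_zero₂₁]

lemma sum_neg_one_pow (n : ℕ) : ∑ t ∈ Finset.range (2*n+1), (-1:ℚ)^t = 1 := by
  induction n with
  | zero => simp
  | succ n ih =>
    have h : 2*(n+1)+1 = (2*n+1) + 1 + 1 := by ring
    rw [h, Finset.sum_range_succ, Finset.sum_range_succ, ih]
    have h1 : (-1:ℚ)^(2*n+1) = -1 := by rw [pow_succ, pow_mul]; simp
    have h2 : (-1:ℚ)^(2*n+1+1) = 1 := by rw [pow_succ, h1]; ring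
    rw [h1, h2]; ring

lemma telescope (N : ℕ) (g : ℚ → ℚ) :
    ∑ t ∈ Finset.range (2*N+1), (-1:ℚ)^t * (g ((t:ℚ) - N) + g ((t:ℚ) - N + 1))
      = g (-(N:ℚ)) + g ((N:ℚ)+1) := by
  set a : ℕ → ℚ := fun t => g ((t:ℚ) - N) with ha
  have hsplit : ∑ t ∈ Finset.range (2*N+1), (-1:ℚ)^t * (g ((t:ℚ) - N) + g ((t:ℚ) - N + 1))
      = (∑ t ∈ Finset.range (2*N+1), (-1:ℚ)^t * a t)
        + ∑ t ∈ Finset.range (2*N+1), (-1:ℚ)^t * a (t+1) := by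
    rw [← Finset.sum_add_distrib]
    refine Finset.sum_congr rfl fun t _ => ?_
    have : a (t+1) = g ((t:ℚ) - N + 1) := by rw [ha]; push_cast; ring_nf
    rw [this]; ring
  have h1 : ∑ t ∈ Finset.range (2*N+1+1), (-1:ℚ)^t * a t
      = (∑ t ∈ Finset.range (2*N+1), (-1:ℚ)^t * a t) + (-1:ℚ)^(2*N+1) * a (2*N+1) :=
    Finset.sum_range_succ _ _
  have h2 : ∑ t ∈ Finset.range (2*N+1+1), (-1:ℚ)^t * a t
      = (∑ t ∈ Finset.range (2*N+1), (-1:ℚ)^(t+1) * a (t+1)) + (-1:ℚ)^0 * a 0 :=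
    Finset.sum_range_succ' _ _
  have h3 : ∑ t ∈ Finset.range (2*N+1), (-1:ℚ)^t * a (t+1)
      = - ∑ t ∈ Finset.range (2*N+1), (-1:ℚ)^(t+1) * a (t+1) := by
    rw [← Finset.sum_neg_distrib]
    refine Finset.sum_congr rfl fun t _ => ?_
    rw [pow_succ]; ring
  have hodd : (-1:ℚ)^(2*N+1) = -1 := by rw [pow_succ, pow_mul]; simp
  have ha0 : a 0 = g (-(N:ℚ)) := by rw [ha]; norm_num
  have haN : a (2*N+1) = g ((N:ℚ)+1) := by rw [ha]; push_cast; ring_nf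
  rw [hsplit, h3]
  have := h1.symm.trans h2
  rw [hodd] at this
  rw [ha0, haN] at *
  linarith [this]

/-- the weighted sums of products (even functional applied to χ_j · φ_r) -/
noncomputable def Fe (N j r : ℕ) : ℚ :=
  ∑ t ∈ Finset.range (2*N+1), (-1:ℚ)^t *
    ((∏ i ∈ Finset.range j, (((t:ℚ)-N)^2 - ((N:ℚ)-i)^2)) *
     (∏ i ∈ Finset.range r, (((t:ℚ)-N)^2 - (i:ℚ)^2)))

/-- closed form -/
noncomputable def Gq (N j r : ℕ) : ℚ :=
  (∏ ℓ ∈ Finset.range j, ((ℓ:ℚ)+1)) * ∏ i ∈ Finset.range (j+2*r), ((N:ℚ)+r-i)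

lemma eta_step (N j : ℕ) (y : ℚ) :
    (∏ i ∈ Finset.range (j+1), ((y+(N:ℚ)-i) * (y-(N:ℚ)+i-1)))
    + (∏ i ∈ Finset.range (j+1), ((y+1+(N:ℚ)-i) * (y+1-(N:ℚ)+i-1)))
    = 2*((∏ i ∈ Finset.range (j+1), (y^2 - ((N:ℚ)-i)^2))
        - ((j:ℚ)+1)*((N:ℚ)-j) * ∏ i ∈ Finset.range j, (y^2-((N:ℚ)-i)^2)) := by
  set A := ∏ i ∈ Finset.range j, (y+(N:ℚ)-i) with hA
  set B := ∏ i ∈ Finset.range j, (y-(N:ℚ)+i) with hB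
  set X := ∏ i ∈ Finset.range j, (y^2 - ((N:ℚ)-i)^2) with hX
  have h1 : ∏ i ∈ Finset.range (j+1), ((y+(N:ℚ)-i) * (y-(N:ℚ)+i-1))
      = (A * (y+(N:ℚ)-j)) * ((y-(N:ℚ)-1) * B) := by
    rw [Finset.prod_mul_distrib, Finset.prod_range_succ]
    congr 1
    rw [Finset.prod_range_succ' (fun i => (y-(N:ℚ)+i-1)) j]
    have : (∏ i ∈ Finset.range j, (y-(N:ℚ)+((i+1:ℕ):ℚ)-1)) = B := by
      refine Finset.prod_congr rfl fun i _ => ?_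
      push_cast; ring
    rw [this]
    push_cast; ring
  have h2 : ∏ i ∈ Finset.range (j+1), ((y+1+(N:ℚ)-i) * (y+1-(N:ℚ)+i-1))
      = (A * (y+(N:ℚ)+1)) * (B * (y-(N:ℚ)+j)) := by
    rw [Finset.prod_mul_distrib]
    congr 1
    · rw [Finset.prod_range_succ' (fun i => (y+1+(N:ℚ)-i)) j]
      have : (∏ i ∈ Finset.range j, (y+1+(N:ℚ)-((i+1:ℕ):ℚ))) = A := by
        refine Finset.prod_congr rfl fun i _ => ?_
        push_cast; ring
      rw [this]
      push_cast; ring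
    · rw [Finset.prod_range_succ]
      have : (∏ i ∈ Finset.range j, (y+1-(N:ℚ)+i-1)) = B := by
        refine Finset.prod_congr rfl fun i _ => ?_
        ring
      rw [this]
      push_cast; ring
  have hAB : A * B = X := by
    rw [hA, hB, ← Finset.prod_mul_distrib]
    refine Finset.prod_congr rfl fun i _ => by ring
  have hXs : ∏ i ∈ Finset.range (j+1), (y^2 - ((N:ℚ)-i)^2) = X * (y^2 - ((N:ℚ)-j)^2) :=
    Finset.prod_range_succ _ _
  rw [h1, h2, hXs]
  have : (A * (y+(N:ℚ)-j)) * ((y-(N:ℚ)-1) * B) = (A*B) * ((y+(N:ℚ)-j) * (y-(N:ℚ)-1)) := by ring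
  rw [this, hAB]
  have : (A * (y+(N:ℚ)+1)) * (B * (y-(N:ℚ)+j)) = (A*B) * ((y+(N:ℚ)+1) * (y-(N:ℚ)+j)) := by ring
  rw [this, hAB]
  ring

lemma Fe_zero_succ (N j : ℕ) : Fe N (j+1) 0 = ((j:ℚ)+1)*((N:ℚ)-j) * Fe N j 0 := by
  have T := telescope N (fun y => ∏ i ∈ Finset.range (j+1), ((y+(N:ℚ)-i) * (y-(N:ℚ)+i-1)))
  have hleft : (∏ i ∈ Finset.range (j+1), ((-(N:ℚ)+(N:ℚ)-i) * (-(N:ℚ)-(N:ℚ)+i-1))) = 0 := by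
    apply Finset.prod_eq_zero (Finset.mem_range.mpr (Nat.succ_pos j))
    norm_num
  have hright : (∏ i ∈ Finset.range (j+1), (((N:ℚ)+1+(N:ℚ)-i) * ((N:ℚ)+1-(N:ℚ)+i-1))) = 0 := by
    apply Finset.prod_eq_zero (Finset.mem_range.mpr (Nat.succ_pos j))
    norm_num
  have key : ∑ t ∈ Finset.range (2*N+1), (-1:ℚ)^t *
      ((fun y => ∏ i ∈ Finset.range (j+1), ((y+(N:ℚ)-i) * (y-(N:ℚ)+i-1))) ((t:ℚ)-N)
       + (fun y => ∏ i ∈ Finset.range (j+1), ((y+(N:ℚ)-i) * (y-(N:ℚ)+i-1))) ((t:ℚ)-N+1))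
      = 2 * Fe N (j+1) 0 - ((j:ℚ)+1)*((N:ℚ)-j) * (2 * Fe N j 0) := by
    rw [Fe, Fe]
    simp only [Finset.range_zero, Finset.prod_empty, mul_one]
    rw [Finset.mul_sum, Finset.mul_sum, Finset.mul_sum, ← Finset.sum_sub_distrib]
    refine Finset.sum_congr rfl fun t _ => ?_
    beta_reduce
    rw [eta_step N j ((t:ℚ)-N)]
    ring
  rw [key, hleft, hright] at T
  linarith

lemma Fe_zero (N j : ℕ) : Fe N j 0 = ∏ ℓ ∈ Finset.range j, (((ℓ:ℚ)+1)*((N:ℚ)-ℓ)) := by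
  induction j with
  | zero =>
    simp only [Fe, Finset.range_zero, Finset.prod_empty, mul_one, one_mul, Finset.prod_const_one]
    exact sum_neg_one_pow N
  | succ j ih =>
    rw [Fe_zero_succ, ih, Finset.prod_range_succ]
    ring

lemma Fe_rec (N j r : ℕ) :
    Fe N j (r+1) = Fe N (j+1) r + (((N:ℚ)-j)^2-(r:ℚ)^2) * Fe N j r := by
  rw [Fe, Fe, Fe, Finset.mul_sum, ← Finset.sum_add_distrib]
  refine Finset.sum_congr rfl fun t _ => ?_
  rw [Finset.prod_range_succ (fun i => (((t:ℚ)-N)^2 - (i:ℚ)^2)) r,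
      Finset.prod_range_succ (fun i => (((t:ℚ)-N)^2 - ((N:ℚ)-i)^2)) j]
  ring

lemma Gq_rec (N j r : ℕ) :
    Gq N j (r+1) = Gq N (j+1) r + (((N:ℚ)-j)^2-(r:ℚ)^2) * Gq N j r := by
  have e1 : j + 2*(r+1) = (j + 2*r + 1) + 1 := by ring
  have e2 : (j+1) + 2*r = (j + 2*r) + 1 := by ring
  set P := ∏ i ∈ Finset.range (j+2*r), ((N:ℚ)+(r:ℚ)-(i:ℚ)) with hP
  have hL : ∏ i ∈ Finset.range (j+2*(r+1)), ((N:ℚ)+((r+1:ℕ):ℚ)-(i:ℚ))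
      = ((N:ℚ)+(r:ℚ)+1) * (P * ((N:ℚ)-(r:ℚ)-(j:ℚ))) := by
    rw [e1, Finset.prod_range_succ' (fun i => ((N:ℚ)+((r+1:ℕ):ℚ)-(i:ℚ))) (j+2*r+1),
        Finset.prod_range_succ (fun i => ((N:ℚ)+((r+1:ℕ):ℚ)-((i+1:ℕ):ℚ))) (j+2*r)]
    have hcongr : ∏ i ∈ Finset.range (j+2*r), ((N:ℚ)+((r+1:ℕ):ℚ)-((i+1:ℕ):ℚ)) = P := by
      refine Finset.prod_congr rfl fun i _ => ?_
      push_cast; ring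
    rw [hcongr]
    push_cast; ring
  have hR : ∏ i ∈ Finset.range ((j+1)+2*r), ((N:ℚ)+(r:ℚ)-(i:ℚ))
      = P * ((N:ℚ)-(r:ℚ)-(j:ℚ)) := by
    rw [e2, Finset.prod_range_succ]
    congr 1
    push_cast; ring
  have hfac : ∏ ℓ ∈ Finset.range (j+1), ((ℓ:ℚ)+1)
      = (∏ ℓ ∈ Finset.range j, ((ℓ:ℚ)+1)) * ((j:ℚ)+1) := by
    rw [Finset.prod_range_succ]
  rw [Gq, Gq, Gq, hL, hR, hfac]
  ring

lemma Fe_eq_Gq (N : ℕ) : ∀ r j, Fe N j r = Gq N j r := by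
  intro r
  induction r with
  | zero =>
    intro j
    rw [Fe_zero, Gq]
    simp only [Nat.mul_zero, Nat.add_zero, Nat.cast_zero]
    rw [← Finset.prod_mul_distrib]
    refine Finset.prod_congr rfl fun i _ => by push_cast; ring
  | succ r ih =>
    intro j
    rw [Fe_rec, Gq_rec, ih (j+1), ih j]


noncomputable def cf (N R : ℕ) : ℚ := ∏ i ∈ Finset.range (2*R), ((N:ℚ)+(R:ℚ)-(i:ℚ))

lemma factq (j : ℕ) : ∏ ℓ ∈ Finset.range j, ((ℓ:ℚ)+1) = (Nat.factorial j : ℚ) := by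
  induction j with
  | zero => simp
  | succ j ih => rw [Finset.prod_range_succ, ih, Nat.factorial_succ]; push_cast; ring

lemma monic_nodes (a : ℕ → ℚ) (j : ℕ) : (∏ i ∈ Finset.range j, (X - C (a i))).Monic :=
  monic_prod_of_monic _ _ fun i _ => monic_X_sub_C _

lemma natDegree_nodes (a : ℕ → ℚ) (j : ℕ) :
    (∏ i ∈ Finset.range j, (X - C (a i))).natDegree = j := by
  rw [Polynomial.natDegree_prod _ _ (fun i _ => (monic_X_sub_C (a i)).ne_zero)]
  simp

lemma det_eval_nodes (m : ℕ) (P : ℕ → ℚ[X]) (hPm : ∀ i, (P i).Monic)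
    (hPd : ∀ i, (P i).natDegree = i) (v : Fin (m+1) → ℚ) :
    (Matrix.of fun j r : Fin (m+1) => (P (j:ℕ)).eval (v r)).det
      = (Matrix.of fun k r : Fin (m+1) => v r ^ (k:ℕ)).det := by
  classical
  set C' : Matrix (Fin (m+1)) (Fin (m+1)) ℚ := Matrix.of fun j k => (P (j:ℕ)).coeff (k:ℕ) with hC
  set V : Matrix (Fin (m+1)) (Fin (m+1)) ℚ := Matrix.of fun k r => v r ^ (k:ℕ) with hV
  have key : (Matrix.of fun j r : Fin (m+1) => (P (j:ℕ)).eval (v r)) = C' * V := by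
    ext j r
    show (P (j:ℕ)).eval (v r) = (C' * V) j r
    rw [Matrix.mul_apply]
    rw [Polynomial.eval_eq_sum_range' (lt_of_le_of_lt (le_of_eq (hPd j)) j.2) (v r)]
    rw [← Fin.sum_univ_eq_sum_range (fun k => (P (j:ℕ)).coeff k * v r ^ k) (m+1)]
    exact Finset.sum_congr rfl fun k _ => rfl
  have hCdet : C'.det = 1 := by
    have htri : C'.BlockTriangular OrderDual.toDual := by
      intro k i hki
      exact Polynomial.coeff_eq_zero_of_natDegree_lt (by rw [hPd]; exact hki)
    rw [Matrix.det_of_lowerTriangular _ htri]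
    apply Finset.prod_eq_one
    intro i _
    have := (hPm (i:ℕ)).coeff_natDegree
    rwa [hPd] at this
  rw [key, Matrix.det_mul, hCdet, one_mul]

lemma det_pow_nodes (m : ℕ) :
    (Matrix.of fun k r : Fin (m+1) => ((r:ℕ):ℚ) ^ (k:ℕ)).det = (Nat.superFactorial m : ℚ) := by
  have h : (Matrix.of fun k r : Fin (m+1) => ((r:ℕ):ℚ) ^ (k:ℕ))
      = (Matrix.vandermonde (fun i : Fin (m+1) => ((i:ℕ):ℚ)))ᵀ := rfl
  rw [h, Matrix.det_transpose]
  exact_mod_cast Matrix.det_vandermonde_id_eq_superFactorial m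

lemma Gq_factor (N j R : ℕ) :
    Gq N j R = (∏ ℓ ∈ Finset.range j, ((ℓ:ℚ)+1))
      * ((∏ i ∈ Finset.range j, ((N:ℚ)-(R:ℚ)-(i:ℚ))) * cf N R) := by
  rw [Gq, cf]
  have h : j + 2*R = 2*R + j := by ring
  rw [h, Finset.prod_range_add (fun i => ((N:ℚ)+(R:ℚ)-(i:ℚ))) (2*R) j]
  have : ∏ i ∈ Finset.range j, ((N:ℚ)+(R:ℚ)-((2*R+i : ℕ):ℚ))
      = ∏ i ∈ Finset.range j, ((N:ℚ)-(R:ℚ)-(i:ℚ)) := by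
    refine Finset.prod_congr rfl fun i _ => by push_cast; ring
  rw [this]
  ring

lemma nodes_eval (N d j : ℕ) (x : ℚ) :
    (∏ i ∈ Finset.range j, (X - C ((N:ℚ)-(d:ℚ)-(i:ℚ)))).eval x
      = ∏ i ∈ Finset.range j, (x - ((N:ℚ)-(d:ℚ)-(i:ℚ))) := by
  rw [Polynomial.eval_prod]
  exact Finset.prod_congr rfl fun i _ => by simp

lemma det_Gq_shift (N m d : ℕ) :
    (Matrix.of fun j r : Fin (m+1) => Gq N (j:ℕ) ((r:ℕ)+d)).det
      = (∏ j ∈ Finset.range (m+1), (Nat.factorial j : ℚ))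
        * (∏ j ∈ Finset.range (m+1), (-1:ℚ)^j)
        * (Nat.superFactorial m : ℚ)
        * ∏ r ∈ Finset.range (m+1), cf N (r+d) := by
  classical
  set P : ℕ → ℚ[X] := fun j => ∏ i ∈ Finset.range j, (X - C ((N:ℚ)-(d:ℚ)-(i:ℚ))) with hPdef
  have key : (Matrix.of fun j r : Fin (m+1) => Gq N (j:ℕ) ((r:ℕ)+d))
      = Matrix.diagonal (fun j : Fin (m+1) => ∏ ℓ ∈ Finset.range (j:ℕ), ((ℓ:ℚ)+1))
        * (Matrix.diagonal (fun j : Fin (m+1) => (-1:ℚ)^(j:ℕ))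
          * (Matrix.of fun j r : Fin (m+1) => (P (j:ℕ)).eval ((r:ℕ):ℚ))
          * Matrix.diagonal (fun r : Fin (m+1) => cf N ((r:ℕ)+d))) := by
    ext j r
    rw [Matrix.diagonal_mul, Matrix.mul_diagonal, Matrix.diagonal_mul]
    show Gq N (j:ℕ) ((r:ℕ)+d) = _ * ((-1:ℚ)^(j:ℕ) * (P (j:ℕ)).eval ((r:ℕ):ℚ) * cf N ((r:ℕ)+d))
    rw [hPdef, nodes_eval, Gq_factor N (j:ℕ) ((r:ℕ)+d)]
    have h2 : ∏ i ∈ Finset.range (j:ℕ), ((N:ℚ)-(((r:ℕ)+d : ℕ):ℚ)-(i:ℚ))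
        = (-1:ℚ)^(j:ℕ) * ∏ i ∈ Finset.range (j:ℕ), (((r:ℕ):ℚ) - ((N:ℚ)-(d:ℚ)-(i:ℚ))) := by
      rw [show ((-1:ℚ)^(j:ℕ)) = ∏ _i ∈ Finset.range (j:ℕ), (-1:ℚ) from by
        rw [Finset.prod_const, Finset.card_range]]
      rw [← Finset.prod_mul_distrib]
      refine Finset.prod_congr rfl fun i _ => by push_cast; ring
    rw [h2]
  rw [key, Matrix.det_mul, Matrix.det_mul, Matrix.det_mul, Matrix.det_diagonal,
    Matrix.det_diagonal, Matrix.det_diagonal,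
    det_eval_nodes m P (fun i => monic_nodes _ i) (fun i => natDegree_nodes _ i), det_pow_nodes]
  rw [Fin.prod_univ_eq_prod_range (fun j => ∏ ℓ ∈ Finset.range j, ((ℓ:ℚ)+1)) (m+1),
    Fin.prod_univ_eq_prod_range (fun j => (-1:ℚ)^j) (m+1),
    Fin.prod_univ_eq_prod_range (fun r => cf N (r+d)) (m+1)]
  rw [Finset.prod_congr rfl (fun j (_ : j ∈ Finset.range (m+1)) => factq j)]
  ring


noncomputable def altPowerSum (s k : ℕ) : ℚ :=
  ∑ j ∈ Finset.Icc 1 s, (-1 : ℚ) ^ (j - 1) * (j : ℚ) ^ k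


noncomputable def mup (N k : ℕ) : ℚ :=
  ∑ t ∈ Finset.range (2*N+1), (-1:ℚ)^t * ((t:ℚ)-N)^k

lemma sum_Icc_one (f : ℕ → ℚ) : ∀ s : ℕ, ∑ j ∈ Finset.Icc 1 s, f j = ∑ t ∈ Finset.range s, f (t+1)
  | 0 => by simp
  | (s+1) => by
      rw [Finset.sum_Icc_succ_top (Nat.succ_le_succ (Nat.zero_le s)), Finset.sum_range_succ,
        sum_Icc_one f s]

lemma apow (N k : ℕ) :
    altPowerSum (2*N+1) k = ∑ t ∈ Finset.range (2*N+1), (-1:ℚ)^t * ((t:ℚ)+1)^k := by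
  rw [altPowerSum, sum_Icc_one]
  refine Finset.sum_congr rfl fun t _ => ?_
  have h1 : (t+1) - 1 = t := by omega
  rw [h1]
  push_cast
  ring

lemma mup_odd (N k : ℕ) (hk : Odd k) : mup N k = 0 := by
  have hrefl := Finset.sum_range_reflect (fun t => (-1:ℚ)^t * ((t:ℚ)-N)^k) (2*N+1)
  have heq : ∀ t ∈ Finset.range (2*N+1),
      (-1:ℚ)^(2*N+1-1-t) * (((2*N+1-1-t : ℕ):ℚ)-N)^k = -((-1:ℚ)^t * ((t:ℚ)-N)^k) := by
    intro t ht
    rw [Finset.mem_range] at ht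
    have h1 : 2*N+1-1-t = 2*N-t := by omega
    have hsign : (-1:ℚ)^(2*N-t) = (-1:ℚ)^t := by
      have hb : ((-1:ℚ)^t)*((-1:ℚ)^t) = 1 := by
        rw [← pow_add]
        have : t + t = 2*t := by ring
        rw [this, pow_mul]; norm_num
      have ha : (-1:ℚ)^(2*N-t) * (-1:ℚ)^t = 1 := by
        rw [← pow_add]
        have : 2*N-t+t = 2*N := by omega
        rw [this, pow_mul]; norm_num
      calc (-1:ℚ)^(2*N-t) = (-1:ℚ)^(2*N-t) * ((-1:ℚ)^t * (-1:ℚ)^t) := by rw [hb]; ring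
        _ = ((-1:ℚ)^(2*N-t) * (-1:ℚ)^t) * (-1:ℚ)^t := by ring
        _ = (-1:ℚ)^t := by rw [ha]; ring
    have hcast : ((2*N-t : ℕ):ℚ) = 2*(N:ℚ) - t := by
      have : (t:ℚ) ≤ 2*N := by exact_mod_cast Nat.le_of_lt_succ ht
      push_cast [Nat.cast_sub (by omega : t ≤ 2*N)]
      ring
    rw [h1, hsign, hcast]
    have : (2*(N:ℚ) - t - N) = -((t:ℚ)-N) := by ring
    rw [this, hk.neg_pow]
    ring
  rw [Finset.sum_congr rfl heq] at hrefl
  rw [Finset.sum_neg_distrib] at hrefl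
  rw [mup]
  linarith [hrefl]

/-- Step A: the Hankel determinant equals the determinant of the centered moment matrix. -/
lemma hankel_to_mup (N n : ℕ) :
    (Matrix.of fun i j : Fin (n+1) => altPowerSum (2*N+1) ((i:ℕ)+(j:ℕ))).det
      = (Matrix.of fun i j : Fin (n+1) => mup N ((i:ℕ)+(j:ℕ))).det := by
  have h1 : (Matrix.of fun i j : Fin (n+1) => altPowerSum (2*N+1) ((i:ℕ)+(j:ℕ)))
      = (Matrix.of fun i j : Fin (n+1) =>
          ∑ t ∈ Finset.range (2*N+1), (-1:ℚ)^t *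
            (((X + C ((N:ℚ)+1))^(i:ℕ)).eval ((t:ℚ)-N) * ((X + C ((N:ℚ)+1))^(j:ℕ)).eval ((t:ℚ)-N))) := by
    ext i j
    show altPowerSum (2*N+1) ((i:ℕ)+(j:ℕ)) = _
    rw [apow]
    refine Finset.sum_congr rfl fun t _ => ?_
    simp only [Polynomial.eval_pow, Polynomial.eval_add, Polynomial.eval_X, Polynomial.eval_C]
    rw [pow_add]
    have : (t:ℚ)-N+((N:ℚ)+1) = (t:ℚ)+1 := by ring
    rw [this]
  rw [h1, det_weighted_eval (Finset.range (2*N+1)) (fun t => (-1:ℚ)^t) (fun t => (t:ℚ)-N) n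
    (fun i => (X + C ((N:ℚ)+1))^i) (fun i => (X + C ((N:ℚ)+1))^i)
    (fun i => (monic_X_add_C _).pow i)
    (fun i => by rw [Polynomial.natDegree_pow, Polynomial.natDegree_X_add_C, mul_one])
    (fun i => (monic_X_add_C _).pow i)
    (fun i => by rw [Polynomial.natDegree_pow, Polynomial.natDegree_X_add_C, mul_one])]
  rfl

/-- Step E: the even block. -/
lemma even_block (N m : ℕ) :
    (Matrix.of fun a b : Fin (m+1) => mup N (2*(a:ℕ)+2*(b:ℕ))).det
      = (Matrix.of fun j r : Fin (m+1) => Gq N (j:ℕ) (r:ℕ)).det := by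
  have h1 : (Matrix.of fun j r : Fin (m+1) => Fe N (j:ℕ) (r:ℕ))
      = (Matrix.of fun j r : Fin (m+1) =>
          ∑ t ∈ Finset.range (2*N+1), (-1:ℚ)^t *
            ((∏ i ∈ Finset.range (j:ℕ), (X - C (((N:ℚ)-i)^2))).eval (((t:ℚ)-N)^2)
              * (∏ i ∈ Finset.range (r:ℕ), (X - C ((i:ℚ)^2))).eval (((t:ℚ)-N)^2))) := by
    ext j r
    show Fe N (j:ℕ) (r:ℕ) = _
    rw [Fe]
    refine Finset.sum_congr rfl fun t _ => ?_
    rw [Polynomial.eval_prod, Polynomial.eval_prod]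
    simp only [Polynomial.eval_sub, Polynomial.eval_X, Polynomial.eval_C]
  have h2 : (Matrix.of fun a b : Fin (m+1) => mup N (2*(a:ℕ)+2*(b:ℕ)))
      = (Matrix.of fun a b : Fin (m+1) =>
          ∑ t ∈ Finset.range (2*N+1), (-1:ℚ)^t * (((t:ℚ)-N)^2)^((a:ℕ)+(b:ℕ))) := by
    ext a b
    show mup N (2*(a:ℕ)+2*(b:ℕ)) = _
    rw [mup]
    refine Finset.sum_congr rfl fun t _ => ?_
    rw [show 2*(a:ℕ)+2*(b:ℕ) = 2*((a:ℕ)+(b:ℕ)) by ring, pow_mul]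
  have h3 : (Matrix.of fun j r : Fin (m+1) => Gq N (j:ℕ) (r:ℕ))
      = (Matrix.of fun j r : Fin (m+1) => Fe N (j:ℕ) (r:ℕ)) := by
    ext j r
    exact (Fe_eq_Gq N (r:ℕ) (j:ℕ)).symm
  rw [h3, h1, h2]
  exact (det_weighted_eval (Finset.range (2*N+1)) (fun t => (-1:ℚ)^t) (fun t => ((t:ℚ)-N)^2) m
    (fun j => ∏ i ∈ Finset.range j, (X - C (((N:ℚ)-i)^2)))
    (fun r => ∏ i ∈ Finset.range r, (X - C ((i:ℚ)^2)))
    (fun j => monic_nodes _ j) (fun j => natDegree_nodes _ j)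
    (fun r => monic_nodes _ r) (fun r => natDegree_nodes _ r)).symm

lemma zphi (z : ℚ) (r : ℕ) :
    ∏ i ∈ Finset.range (r+1), (z - (i:ℚ)^2)
      = z * ∏ i ∈ Finset.range r, (z - ((i:ℚ)+1)^2) := by
  rw [Finset.prod_range_succ' (fun i => (z - (i:ℚ)^2)) r]
  have : ∏ i ∈ Finset.range r, (z - ((i+1:ℕ):ℚ)^2) = ∏ i ∈ Finset.range r, (z - ((i:ℚ)+1)^2) := by
    refine Finset.prod_congr rfl fun i _ => by push_cast; ring
  rw [this]
  norm_num
  ring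

/-- Step O: the odd block. -/
lemma odd_block (N k : ℕ) :
    (Matrix.of fun a b : Fin (k+1) => mup N (2*(a:ℕ)+2*(b:ℕ)+2)).det
      = (Matrix.of fun j r : Fin (k+1) => Gq N (j:ℕ) ((r:ℕ)+1)).det := by
  have h1 : (Matrix.of fun j r : Fin (k+1) => Gq N (j:ℕ) ((r:ℕ)+1))
      = (Matrix.of fun j r : Fin (k+1) =>
          ∑ t ∈ Finset.range (2*N+1), ((-1:ℚ)^t * ((t:ℚ)-N)^2) *
            ((∏ i ∈ Finset.range (j:ℕ), (X - C (((N:ℚ)-i)^2))).eval (((t:ℚ)-N)^2)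
              * (∏ i ∈ Finset.range (r:ℕ), (X - C (((i:ℚ)+1)^2))).eval (((t:ℚ)-N)^2))) := by
    ext j r
    show Gq N (j:ℕ) ((r:ℕ)+1) = _
    rw [← Fe_eq_Gq, Fe]
    refine Finset.sum_congr rfl fun t _ => ?_
    rw [Polynomial.eval_prod, Polynomial.eval_prod]
    simp only [Polynomial.eval_sub, Polynomial.eval_X, Polynomial.eval_C]
    rw [zphi (((t:ℚ)-N)^2) (r:ℕ)]
    ring
  have h2 : (Matrix.of fun a b : Fin (k+1) => mup N (2*(a:ℕ)+2*(b:ℕ)+2))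
      = (Matrix.of fun a b : Fin (k+1) =>
          ∑ t ∈ Finset.range (2*N+1), ((-1:ℚ)^t * ((t:ℚ)-N)^2) * (((t:ℚ)-N)^2)^((a:ℕ)+(b:ℕ))) := by
    ext a b
    show mup N (2*(a:ℕ)+2*(b:ℕ)+2) = _
    rw [mup]
    refine Finset.sum_congr rfl fun t _ => ?_
    rw [show 2*(a:ℕ)+2*(b:ℕ)+2 = 2*((a:ℕ)+(b:ℕ))+2 by ring, pow_add, pow_mul]
    ring
  rw [h1, h2]
  exact (det_weighted_eval (Finset.range (2*N+1)) (fun t => (-1:ℚ)^t * ((t:ℚ)-N)^2)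
    (fun t => ((t:ℚ)-N)^2) k
    (fun j => ∏ i ∈ Finset.range j, (X - C (((N:ℚ)-i)^2)))
    (fun r => ∏ i ∈ Finset.range r, (X - C (((i:ℚ)+1)^2)))
    (fun j => monic_nodes _ j) (fun j => natDegree_nodes _ j)
    (fun r => monic_nodes _ r) (fun r => natDegree_nodes _ r)).symm

noncomputable def SFQ (a : ℕ) : ℚ := ∏ k ∈ Finset.range a, (Nat.factorial k : ℚ)
noncomputable def SGN (a : ℕ) : ℚ := ∏ j ∈ Finset.range a, (-1:ℚ)^j
noncomputable def gg (N i : ℕ) : ℚ := ((N:ℚ)+1+i)*((N:ℚ)-i)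

lemma sfq_cast (m : ℕ) : (Nat.superFactorial m : ℚ) = SFQ (m+1) := by
  rw [SFQ, ← Nat.prod_range_succ_factorial m]
  push_cast
  rfl

lemma SGN_succ (a : ℕ) : SGN (a+1) = SGN a * (-1:ℚ)^a := Finset.prod_range_succ _ _

lemma SGN_sq (a : ℕ) : SGN a * SGN a = 1 := by
  rw [SGN, ← Finset.prod_mul_distrib]
  apply Finset.prod_eq_one
  intro j _
  rw [← pow_add]
  have : j + j = 2*j := by ring
  rw [this, pow_mul]; norm_num

lemma cf_zero (N : ℕ) : cf N 0 = 1 := by simp [cf]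

lemma cf_succ (N r : ℕ) : cf N (r+1) = (((N:ℚ)+1+r) * ((N:ℚ)-r)) * cf N r := by
  rw [cf, cf]
  have h : 2*(r+1) = (2*r+1)+1 := by ring
  rw [h, Finset.prod_range_succ' (fun i => ((N:ℚ)+((r+1:ℕ):ℚ)-(i:ℚ))) (2*r+1),
    Finset.prod_range_succ (fun i => ((N:ℚ)+((r+1:ℕ):ℚ)-((i+1:ℕ):ℚ))) (2*r)]
  have hc : ∏ i ∈ Finset.range (2*r), ((N:ℚ)+((r+1:ℕ):ℚ)-((i+1:ℕ):ℚ))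
      = ∏ i ∈ Finset.range (2*r), ((N:ℚ)+(r:ℚ)-(i:ℚ)) := by
    refine Finset.prod_congr rfl fun i _ => by push_cast; ring
  rw [hc]
  push_cast
  ring

lemma cf_prod (N r : ℕ) : cf N r = ∏ i ∈ Finset.range r, gg N i := by
  induction r with
  | zero => simp [cf_zero]
  | succ r ih => rw [cf_succ, ih, Finset.prod_range_succ, gg]; ring

/-- multiplicity counting -/
lemma prod_prod_pow (g : ℕ → ℚ) (a : ℕ) :
    ∏ r ∈ Finset.range a, ∏ i ∈ Finset.range (r+1), g i
      = ∏ i ∈ Finset.range a, (g i)^(a-i) := by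
  induction a with
  | zero => simp
  | succ a ih =>
    rw [Finset.prod_range_succ, ih]
    have hr : ∏ i ∈ Finset.range (a+1), (g i)^(a+1-i)
        = ∏ i ∈ Finset.range (a+1), ((g i)^(a-i) * g i) := by
      refine Finset.prod_congr rfl fun i hi => ?_
      rw [Finset.mem_range] at hi
      rw [← pow_succ]
      congr 1
      omega
    rw [hr, Finset.prod_mul_distrib]
    congr 1
    rw [Finset.prod_range_succ]
    have : (g a)^(a-a) = 1 := by simp
    rw [this, mul_one]

lemma CF1_eq (N m : ℕ) :
    ∏ r ∈ Finset.range m, cf N (r+1) = ∏ i ∈ Finset.range m, (gg N i)^(m-i) := by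
  rw [← prod_prod_pow]
  exact Finset.prod_congr rfl fun r _ => cf_prod N (r+1)

lemma CF0_eq_CF1 (N m : ℕ) :
    ∏ r ∈ Finset.range (m+1), cf N r = ∏ r ∈ Finset.range m, cf N (r+1) := by
  rw [Finset.prod_range_succ' (fun r => cf N r) m, cf_zero, mul_one]

lemma FACT1 (m : ℕ) :
    (Nat.factorial m : ℚ) * SFQ (m+1) * SFQ m
      = ∏ i ∈ Finset.range m, ((i:ℚ)+1)^(2*(m-i)) := by
  induction m with
  | zero => simp [SFQ]
  | succ m ih =>
    have hS1 : SFQ (m+2) = SFQ (m+1) * (Nat.factorial (m+1) : ℚ) := Finset.prod_range_succ _ _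
    have hS2 : SFQ (m+1) = SFQ m * (Nat.factorial m : ℚ) := Finset.prod_range_succ _ _
    have hr : ∏ i ∈ Finset.range (m+1), ((i:ℚ)+1)^(2*((m+1)-i))
        = (∏ i ∈ Finset.range (m+1), ((i:ℚ)+1)^(2*(m-i))) * (∏ i ∈ Finset.range (m+1), ((i:ℚ)+1))^2 := by
      rw [← Finset.prod_pow, ← Finset.prod_mul_distrib]
      refine Finset.prod_congr rfl fun i hi => ?_
      rw [Finset.mem_range] at hi
      rw [← pow_add]
      congr 1
      omega
    have hr2 : ∏ i ∈ Finset.range (m+1), ((i:ℚ)+1)^(2*(m-i))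
        = ∏ i ∈ Finset.range m, ((i:ℚ)+1)^(2*(m-i)) := by
      rw [Finset.prod_range_succ]
      simp
    have hfac : ∏ i ∈ Finset.range (m+1), ((i:ℚ)+1) = (Nat.factorial (m+1) : ℚ) := by
      induction (m+1) with
      | zero => simp
      | succ k ihk => rw [Finset.prod_range_succ, ihk, Nat.factorial_succ]; push_cast; ring
    rw [hr, hr2, hfac, ← ih, hS1, hS2, Nat.factorial_succ]
    push_cast
    ring

lemma Q4 (m : ℕ) :
    ∏ ℓ ∈ Finset.range (m+1), ((4:ℚ)^(2*(m-ℓ)+1)/16^ℓ) = 4^(m+1) := by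
  induction m with
  | zero => norm_num
  | succ m ih =>
    rw [Finset.prod_range_succ]
    have hcongr : ∏ ℓ ∈ Finset.range (m+1), ((4:ℚ)^(2*((m+1)-ℓ)+1)/16^ℓ)
        = ∏ ℓ ∈ Finset.range (m+1), (((4:ℚ)^(2*(m-ℓ)+1)/16^ℓ) * 16) := by
      refine Finset.prod_congr rfl fun ℓ hℓ => ?_
      rw [Finset.mem_range] at hℓ
      have he : 2*((m+1)-ℓ)+1 = (2*(m-ℓ)+1) + 2 := by omega
      rw [he, pow_add]
      norm_num
      ring
    rw [hcongr, Finset.prod_mul_distrib, ih, Finset.prod_const, Finset.card_range]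
    have h16 : (16:ℚ) = 4^2 := by norm_num
    have : 2*((m+1)-(m+1))+1 = 1 := by omega
    rw [this, h16]
    rw [← pow_mul]
    field_simp
    ring

lemma det_even_block_val (N m : ℕ) :
    (Matrix.of fun a b : Fin (m+1) => mup N (2*(a:ℕ)+2*(b:ℕ))).det
      = SFQ (m+1) * SGN (m+1) * SFQ (m+1) * ∏ r ∈ Finset.range (m+1), cf N r := by
  rw [even_block]
  have h := det_Gq_shift N m 0
  rw [sfq_cast] at h
  exact h

lemma det_odd_block_val (N m : ℕ) :
    (Matrix.of fun a b : Fin m => mup N (2*(a:ℕ)+2*(b:ℕ)+2)).det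
      = SFQ m * SGN m * SFQ m * ∏ r ∈ Finset.range m, cf N (r+1) := by
  cases m with
  | zero =>
    have : (Matrix.of fun a b : Fin 0 => mup N (2*(a:ℕ)+2*(b:ℕ)+2)).det = 1 :=
      Matrix.det_fin_zero
    rw [this]
    simp [SFQ, SGN]
  | succ k =>
    rw [odd_block]
    have h := det_Gq_shift N k 1
    rw [sfq_cast] at h
    exact h

lemma hankel_even (N m : ℕ) :
    (Matrix.of fun i j : Fin (2*m+1) => altPowerSum (2*N+1) ((i:ℕ)+(j:ℕ))).det
      = (-1:ℚ)^m * (SFQ (m+1) * SFQ m * ∏ r ∈ Finset.range m, cf N (r+1))^2 := by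
  rw [hankel_to_mup N (2*m)]
  have h : (m+1)+m = 2*m+1 := by omega
  rw [← Matrix.det_submatrix_equiv_self (finCongr h)
    (Matrix.of fun i j : Fin (2*m+1) => mup N ((i:ℕ)+(j:ℕ)))]
  have hsub : (Matrix.of fun i j : Fin (2*m+1) => mup N ((i:ℕ)+(j:ℕ))).submatrix
        (finCongr h) (finCongr h)
      = Matrix.of fun i j : Fin ((m+1)+m) => mup N ((i:ℕ)+(j:ℕ)) := by
    ext i j
    simp [Matrix.submatrix_apply]
  rw [hsub, det_checker (mup N) (fun k hk => mup_odd N k hk) (m+1) m (Or.inr rfl),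
    det_even_block_val, det_odd_block_val, CF0_eq_CF1, SGN_succ]
  have key : ∀ X Y Cc S : ℚ,
      (X * (S * (-1:ℚ)^m) * X * Cc) * (Y * S * Y * Cc)
        = ((-1:ℚ)^m * (X*Y*Cc)^2) * (S * S) := by intros; ring
  rw [key, SGN_sq, mul_one]

lemma hankel_odd' (N m : ℕ) :
    (Matrix.of fun i j : Fin (2*m+1+1) => altPowerSum (2*N+1) ((i:ℕ)+(j:ℕ))).det
      = SFQ (m+1)^4 * (∏ r ∈ Finset.range m, cf N (r+1))
        * (∏ r ∈ Finset.range (m+1), cf N (r+1)) := by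
  rw [hankel_to_mup N (2*m+1)]
  have h : (m+1)+(m+1) = 2*m+1+1 := by omega
  rw [← Matrix.det_submatrix_equiv_self (finCongr h)
    (Matrix.of fun i j : Fin (2*m+1+1) => mup N ((i:ℕ)+(j:ℕ)))]
  have hsub : (Matrix.of fun i j : Fin (2*m+1+1) => mup N ((i:ℕ)+(j:ℕ))).submatrix
        (finCongr h) (finCongr h)
      = Matrix.of fun i j : Fin ((m+1)+(m+1)) => mup N ((i:ℕ)+(j:ℕ)) := by
    ext i j
    simp [Matrix.submatrix_apply]
  rw [hsub, det_checker (mup N) (fun k hk => mup_odd N k hk) (m+1) (m+1) (Or.inl rfl),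
    det_even_block_val, det_odd_block_val, CF0_eq_CF1]
  have key : ∀ X C1 C2 S : ℚ,
      (X * S * X * C1) * (X * S * X * C2) = (X^4 * C1 * C2) * (S * S) := by intros; ring
  rw [key, SGN_sq, mul_one]

lemma prod_Icc_one (f : ℕ → ℚ) : ∀ s : ℕ,
    ∏ j ∈ Finset.Icc 1 s, f j = ∏ t ∈ Finset.range s, f (t+1)
  | 0 => by simp
  | (s+1) => by
      rw [Finset.prod_Icc_succ_top (Nat.succ_le_succ (Nat.zero_le s)), Finset.prod_range_succ,
        prod_Icc_one f s]

lemma target_even (N m : ℕ) :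
    ((-1:ℚ)^m / (Nat.factorial m : ℚ)^2) *
      ∏ ℓ ∈ Finset.Icc 1 m,
        (((ℓ:ℚ)^2/4) * (((2*N+1 : ℕ):ℚ)^2 - (2*(ℓ:ℚ)-1)^2))^(2*(m+1-ℓ))
      = (-1:ℚ)^m * (SFQ (m+1) * SFQ m * ∏ r ∈ Finset.range m, cf N (r+1))^2 := by
  rw [prod_Icc_one]
  have hfac : ∀ i ∈ Finset.range m,
      ((((i+1:ℕ):ℚ)^2/4) * (((2*N+1 : ℕ):ℚ)^2 - (2*((i+1:ℕ):ℚ)-1)^2))^(2*(m+1-(i+1)))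
        = ((((i:ℚ)+1)^2 * gg N i)^(m-i))^2 := by
    intro i hi
    rw [Finset.mem_range] at hi
    have h1 : (((i+1:ℕ):ℚ)^2/4) * (((2*N+1 : ℕ):ℚ)^2 - (2*((i+1:ℕ):ℚ)-1)^2)
        = ((i:ℚ)+1)^2 * gg N i := by
      rw [gg]; push_cast; ring
    have h2 : 2*(m+1-(i+1)) = (m-i)*2 := by omega
    rw [h1, h2, pow_mul]
  rw [Finset.prod_congr rfl hfac, Finset.prod_pow]
  have h3 : ∏ i ∈ Finset.range m, (((i:ℚ)+1)^2 * gg N i)^(m-i)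
      = (∏ i ∈ Finset.range m, ((i:ℚ)+1)^(2*(m-i))) * ∏ i ∈ Finset.range m, (gg N i)^(m-i) := by
    rw [← Finset.prod_mul_distrib]
    refine Finset.prod_congr rfl fun i _ => ?_
    rw [mul_pow, ← pow_mul]
  rw [h3, ← FACT1, ← CF1_eq]
  have hne : (Nat.factorial m : ℚ) ≠ 0 := by
    exact_mod_cast Nat.factorial_ne_zero m
  field_simp

lemma target_odd (N m : ℕ) :
    (1/4^(m+1) : ℚ) *
      ∏ ℓ ∈ Finset.range (m+1),
        ((Nat.factorial ℓ : ℚ)^4/16^ℓ) * (((2*N+1 : ℕ):ℚ)^2 - (2*(ℓ:ℚ)+1)^2)^(2*(m-ℓ)+1)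
      = SFQ (m+1)^4 * (∏ r ∈ Finset.range m, cf N (r+1))
        * (∏ r ∈ Finset.range (m+1), cf N (r+1)) := by
  have hfac : ∀ ℓ ∈ Finset.range (m+1),
      ((Nat.factorial ℓ : ℚ)^4/16^ℓ) * (((2*N+1 : ℕ):ℚ)^2 - (2*(ℓ:ℚ)+1)^2)^(2*(m-ℓ)+1)
        = ((Nat.factorial ℓ : ℚ)^4) * (((4:ℚ)^(2*(m-ℓ)+1))/16^ℓ)
            * ((gg N ℓ)^(m-ℓ) * (gg N ℓ)^(m+1-ℓ)) := by
    intro ℓ hℓ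
    rw [Finset.mem_range] at hℓ
    have h1 : ((2*N+1 : ℕ):ℚ)^2 - (2*(ℓ:ℚ)+1)^2 = 4 * gg N ℓ := by
      rw [gg]; push_cast; ring
    have h2 : (m-ℓ) + (m+1-ℓ) = 2*(m-ℓ)+1 := by omega
    rw [h1, mul_pow, ← pow_add, h2]
    ring
  rw [Finset.prod_congr rfl hfac, Finset.prod_mul_distrib, Finset.prod_mul_distrib,
    Finset.prod_mul_distrib, Finset.prod_pow, Q4]
  have h4 : ∏ ℓ ∈ Finset.range (m+1), (gg N ℓ)^(m-ℓ)
      = ∏ ℓ ∈ Finset.range m, (gg N ℓ)^(m-ℓ) := by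
    rw [Finset.prod_range_succ]
    simp
  rw [h4, ← CF1_eq, ← CF1_eq]
  have h5 : (4:ℚ)^(m+1) ≠ 0 := by positivity
  rw [SFQ]
  field_simp

end HankelAux
end HankelAuxSection

theorem hankel_altPowerSum_odd (s : ℕ) (hs : 1 ≤ s) (hodd : Odd s) (m : ℕ) :
    hankel (altPowerSum s) (2 * m)
      = ((-1 : ℚ) ^ m / (Nat.factorial m : ℚ) ^ 2) *
        ∏ ℓ ∈ Finset.Icc 1 m,
          (((ℓ : ℚ) ^ 2 / 4) * ((s : ℚ) ^ 2 - (2 * (ℓ : ℚ) - 1) ^ 2)) ^ (2 * (m + 1 - ℓ)) ∧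
    hankel (altPowerSum s) (2 * m + 1)
      = (1 / 4 ^ (m + 1) : ℚ) *
        ∏ ℓ ∈ Finset.range (m + 1),
          ((Nat.factorial ℓ : ℚ) ^ 4 / 16 ^ ℓ) *
            ((s : ℚ) ^ 2 - (2 * (ℓ : ℚ) + 1) ^ 2) ^ (2 * (m - ℓ) + 1) ∧
    ((s + 1) / 2 ≤ m → hankel (altPowerSum s) (2 * m) = 0) ∧
    ((s - 1) / 2 ≤ m → hankel (altPowerSum s) (2 * m + 1) = 0) := by
  obtain ⟨N, rfl⟩ : ∃ N, s = 2*N+1 := by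
    obtain ⟨k, hk⟩ := hodd
    exact ⟨k, by omega⟩
  have h1 : hankel (altPowerSum (2*N+1)) (2*m)
      = (-1:ℚ)^m * (HankelAux.SFQ (m+1) * HankelAux.SFQ m
          * ∏ r ∈ Finset.range m, HankelAux.cf N (r+1))^2 := by
    show (Matrix.of fun i j : Fin (2*m+1) => altPowerSum (2*N+1) (i.1+j.1)).det = _
    exact HankelAux.hankel_even N m
  have h2 : hankel (altPowerSum (2*N+1)) (2*m+1)
      = HankelAux.SFQ (m+1)^4 * (∏ r ∈ Finset.range m, HankelAux.cf N (r+1))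
        * (∏ r ∈ Finset.range (m+1), HankelAux.cf N (r+1)) := by
    show (Matrix.of fun i j : Fin (2*m+1+1) => altPowerSum (2*N+1) (i.1+j.1)).det = _
    exact HankelAux.hankel_odd' N m
  have hcf : HankelAux.cf N (N+1) = 0 := by
    rw [HankelAux.cf_prod]
    apply Finset.prod_eq_zero (i := N) (Finset.mem_range.mpr (by omega))
    rw [HankelAux.gg]
    ring
  refine ⟨?_, ?_, ?_, ?_⟩
  · rw [h1]
    exact (HankelAux.target_even N m).symm
  · rw [h2]
    exact (HankelAux.target_odd N m).symm
  · intro hm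
    have hNm : N < m := by omega
    have hCF : ∏ r ∈ Finset.range m, HankelAux.cf N (r+1) = 0 :=
      Finset.prod_eq_zero (Finset.mem_range.mpr hNm) hcf
    rw [h1, hCF]
    ring
  · intro hm
    have hNm : N < m+1 := by omega
    have hCF : ∏ r ∈ Finset.range (m+1), HankelAux.cf N (r+1) = 0 :=
      Finset.prod_eq_zero (Finset.mem_range.mpr hNm) hcf
    rw [h2, hCF]
    ring
end
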